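/- arXiv:1804.10449 — 2 statements merged into one kernel-verified Lean document; each statement's English description precedes it below -/
import Mathlib

section
/- Let U ⊆ [0, π) with 0 ∈ U, |U| ≥ 3, fix distinct α, β ∈ U \ {0}, and for γ ∈ U \ {0} let p(γ) be the γ-projection of ⟦0,1⟧. Then for every γ ∈ U \ {0}, p(γ)·M_ℝ ⊆ M_ℝ, where M_ℝ is the real part of the origami set M(U). -/
open Real Complex Set

/-- The `θ`-projection of `z`: the unique real `x` with `z ∈ x + ℝ·exp(iθ)`
(for `θ ∈ (0,π)`); explicitly `x = Re z − Im z · cos θ / sin θ`. -/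
noncomputable def proj (θ : ℝ) (z : ℂ) : ℝ := z.re - z.im * Real.cos θ / Real.sin θ

/-- `inter α β r s` is the (unique, for distinct `α β ∈ (0,π)`) complex number
with `α`-projection `r` and `β`-projection `s`, i.e. `⟦r,s⟧_{α,β}`. -/
noncomputable def inter (α β r s : ℝ) : ℂ :=
  Classical.epsilon fun z : ℂ => proj α z = r ∧ proj β z = s

/-- The line through `z` with slope (angle) `θ`. -/
def lineThru (z : ℂ) (θ : ℝ) : Set ℂ := {w | ∃ t : ℝ, w = z + t * Complex.exp (θ * Complex.I)}

/-- The recursively defined stages of the origami set. -/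
def origamiStep (U : Set ℝ) : ℕ → Set ℂ
  | 0 => {0, 1}
  | k + 1 => {w | ∃ z ∈ origamiStep U k, ∃ z' ∈ origamiStep U k,
      ∃ γ ∈ U, ∃ γ' ∈ U, γ ≠ γ' ∧ w ∈ lineThru z γ ∧ w ∈ lineThru z' γ'}

/-- The origami set `M(U)`. -/
def origami (U : Set ℝ) : Set ℂ := ⋃ k, origamiStep U k

/-- The real part `M_ℝ = M(U) ∩ ℝ`, viewed as a set of reals. -/
def origamiR (U : Set ℝ) : Set ℝ := {x : ℝ | (x : ℂ) ∈ origami U}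

/-
`w := x · ⟦0,1⟧` has `α`-projection `0` and `β`-projection `x`, so it is the intersection of the
`α`-line through `0` and the `β`-line through `x`, both points of `M(U)`. Intersecting the
`γ`-line through `w` with the real axis (slope `0 ∈ U`) then yields its `γ`-projection, which is
`x · p(γ)` because projections are `ℝ`-linear.
-/

lemma proj_ofReal_mul (θ x : ℝ) (z : ℂ) : proj θ ((x : ℂ) * z) = x * proj θ z := by
  simp only [proj, mul_re, mul_im, ofReal_re, ofReal_im, zero_mul, sub_zero, add_zero]
  ring

lemma mem_lineThru_comm {z w : ℂ} {θ : ℝ} (h : z ∈ lineThru w θ) : w ∈ lineThru z θ := by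
  obtain ⟨t, rfl⟩ := h
  exact ⟨-t, by push_cast; ring⟩

lemma mem_lineThru_proj {θ : ℝ} (hθ : Real.sin θ ≠ 0) (z : ℂ) :
    z ∈ lineThru (proj θ z : ℂ) θ := by
  refine ⟨z.im / Real.sin θ, Complex.ext ?_ ?_⟩
  · simp only [proj, add_re, ofReal_re, mul_re, ofReal_im, exp_ofReal_mul_I_re,
      exp_ofReal_mul_I_im, zero_mul, sub_zero]
    field_simp
    ring
  · simp only [add_im, ofReal_im, mul_im, ofReal_re, exp_ofReal_mul_I_re,
      exp_ofReal_mul_I_im, zero_add, zero_mul, add_zero]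
    field_simp

lemma ofReal_mem_lineThru_zero (x y : ℝ) : (x : ℂ) ∈ lineThru (y : ℂ) 0 :=
  ⟨x - y, by simp⟩

lemma sin_ne_zero_of_mem_Ico {θ : ℝ} (hθ : θ ∈ Ico 0 π) (hθ0 : θ ≠ 0) : Real.sin θ ≠ 0 :=
  (Real.sin_pos_of_pos_of_lt_pi (lt_of_le_of_ne hθ.1 (Ne.symm hθ0)) hθ.2).ne'

lemma cos_div_sin_injOn : InjOn (fun θ => Real.cos θ / Real.sin θ) (Ioo 0 π) := by
  intro α hα β hβ h
  have hsα := Real.sin_pos_of_pos_of_lt_pi hα.1 hα.2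
  have hsβ := Real.sin_pos_of_pos_of_lt_pi hβ.1 hβ.2
  rw [div_eq_div_iff hsα.ne' hsβ.ne'] at h
  have hsin : Real.sin (β - α) = 0 := by rw [Real.sin_sub]; linarith
  rw [Real.sin_eq_zero_iff_of_lt_of_lt (by linarith [hα.2, hβ.1]) (by linarith [hα.1, hβ.2])]
    at hsin
  linarith

lemma exists_proj_eq_proj_eq {α β : ℝ} (hα : α ∈ Ioo 0 π) (hβ : β ∈ Ioo 0 π) (hαβ : α ≠ β)
    (r s : ℝ) : ∃ z : ℂ, proj α z = r ∧ proj β z = s := by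
  set cα := Real.cos α / Real.sin α
  set cβ := Real.cos β / Real.sin β
  have hc : cα - cβ ≠ 0 := sub_ne_zero.2 fun h => hαβ (cos_div_sin_injOn hα hβ h)
  set t := (s - r) / (cα - cβ)
  refine ⟨⟨r + t * cα, t⟩, ?_, ?_⟩
  · simp only [proj, mul_div_assoc]
    ring
  · simp only [proj, mul_div_assoc]
    have : t * (cα - cβ) = s - r := div_mul_cancel₀ _ hc
    linarith

lemma proj_inter {α β : ℝ} (hα : α ∈ Ioo 0 π) (hβ : β ∈ Ioo 0 π) (hαβ : α ≠ β) (r s : ℝ) :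
    proj α (inter α β r s) = r ∧ proj β (inter α β r s) = s :=
  Classical.epsilon_spec (exists_proj_eq_proj_eq hα hβ hαβ r s)

section Origami

variable {U : Set ℝ} {γ γ' : ℝ}

lemma origamiStep_subset_succ (hγ : γ ∈ U) (hγ' : γ' ∈ U) (hne : γ ≠ γ') (k : ℕ) :
    origamiStep U k ⊆ origamiStep U (k + 1) :=
  fun z hz => ⟨z, hz, z, hz, γ, hγ, γ', hγ', hne, ⟨0, by simp⟩, ⟨0, by simp⟩⟩

lemma zero_mem_origami : (0 : ℂ) ∈ origami U :=
  mem_iUnion.2 ⟨0, Or.inl rfl⟩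

lemma mem_origami_of_mem_lineThru (hγ : γ ∈ U) (hγ' : γ' ∈ U) (hne : γ ≠ γ')
    {z z' w : ℂ} (hz : z ∈ origami U) (hz' : z' ∈ origami U)
    (hw : w ∈ lineThru z γ) (hw' : w ∈ lineThru z' γ') : w ∈ origami U := by
  obtain ⟨k, hk⟩ := mem_iUnion.1 hz
  obtain ⟨l, hl⟩ := mem_iUnion.1 hz'
  have hmono : Monotone (origamiStep U) :=
    monotone_nat_of_le_succ (origamiStep_subset_succ hγ hγ' hne)
  exact mem_iUnion.2 ⟨max k l + 1, z, hmono (le_max_left k l) hk,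
    z', hmono (le_max_right k l) hl, γ, hγ, γ', hγ', hne, hw, hw'⟩

lemma mem_origami_of_proj_mem (hγ : γ ∈ U) (hγ' : γ' ∈ U) (hne : γ ≠ γ')
    (hsγ : Real.sin γ ≠ 0) (hsγ' : Real.sin γ' ≠ 0) {z : ℂ}
    (hz : proj γ z ∈ origamiR U) (hz' : proj γ' z ∈ origamiR U) : z ∈ origami U :=
  mem_origami_of_mem_lineThru hγ hγ' hne hz hz' (mem_lineThru_proj hsγ z)
    (mem_lineThru_proj hsγ' z)

lemma proj_mem_origamiR (h0 : (0 : ℝ) ∈ U) (hγ : γ ∈ U) (hγ0 : γ ≠ 0)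
    (hsγ : Real.sin γ ≠ 0) {z : ℂ} (hz : z ∈ origami U) : proj γ z ∈ origamiR U :=
  mem_origami_of_mem_lineThru hγ h0 hγ0 hz zero_mem_origami
    (mem_lineThru_comm (mem_lineThru_proj hsγ z)) (by exact_mod_cast ofReal_mem_lineThru_zero _ 0)

end Origami

theorem p_mul_mem_general (U : Set ℝ) (hU : U ⊆ Set.Ico 0 Real.pi) (h0 : (0 : ℝ) ∈ U)
    (α β : ℝ) (hα : α ∈ U) (hβ : β ∈ U)
    (hα0 : α ≠ 0) (hβ0 : β ≠ 0) (hαβ : α ≠ β) :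
    ∀ γ ∈ U \ {0}, ∀ x ∈ origamiR U, proj γ (inter α β 0 1) * x ∈ origamiR U := by
  rintro γ ⟨hγ, hγ0 : γ ≠ 0⟩ x hx
  have hsα := sin_ne_zero_of_mem_Ico (hU hα) hα0
  have hsβ := sin_ne_zero_of_mem_Ico (hU hβ) hβ0
  have hsγ := sin_ne_zero_of_mem_Ico (hU hγ) hγ0
  have hIoo {θ} (hθ : θ ∈ U) (hθ0 : θ ≠ 0) : θ ∈ Ioo 0 π :=
    ⟨lt_of_le_of_ne (hU hθ).1 (Ne.symm hθ0), (hU hθ).2⟩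
  obtain ⟨hpα, hpβ⟩ := proj_inter (hIoo hα hα0) (hIoo hβ hβ0) hαβ 0 1
  have hw : (x : ℂ) * inter α β 0 1 ∈ origami U := by
    refine mem_origami_of_proj_mem hα hβ hαβ hsα hsβ ?_ ?_
    · rw [proj_ofReal_mul, hpα, mul_zero]
      exact zero_mem_origami
    · rwa [proj_ofReal_mul, hpβ, mul_one]
  have := proj_mem_origamiR h0 hγ hγ0 hsγ hw
  rwa [proj_ofReal_mul, mul_comm] at this

theorem p_mul_mem (U : Set ℝ) (hU : U ⊆ Set.Ico 0 Real.pi) (h0 : (0 : ℝ) ∈ U)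
    (hcard : 3 ≤ U.encard) (α β : ℝ) (hα : α ∈ U) (hβ : β ∈ U)
    (hα0 : α ≠ 0) (hβ0 : β ≠ 0) (hαβ : α ≠ β) :
    ∀ γ ∈ U \ {0}, ∀ x ∈ origamiR U, proj γ (inter α β 0 1) * x ∈ origamiR U :=
  p_mul_mem_general U hU h0 α β hα hβ hα0 hβ0 hαβ
end

section
/- Let α, β ∈ (0, π) be distinct. Then the product ⟦0,1⟧·⟦1,0⟧ has α-projection sin²(β)/sin²(α−β) and β-projection sin²(α)/sin²(α−β), i.e. ⟦0,1⟧·⟦1,0⟧ = ⟦sin²β/sin²(α−β), sin²α/sin²(α−β)⟧. -/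
open Real Complex Set

/-! The two points are `⟦1,0⟧ = sin α · e^{iβ} / sin(α-β)` and `⟦0,1⟧ = -sin β · e^{iα} / sin(α-β)`,
so their product is `-sin α sin β · e^{i(α+β)} / sin²(α-β)`, whose projections are read off
directly. Everything reduces to the explicit coordinates of `⟦r,s⟧`, which are pinned down
because two lines with directions `α ≠ β` meet in exactly one point. -/

lemma sin_sub_ne_zero_of_mem_Ioo {α β : ℝ} (hα : α ∈ Ioo 0 π) (hβ : β ∈ Ioo 0 π)
    (hαβ : α ≠ β) : Real.sin (α - β) ≠ 0 := by
  rw [Ne, Real.sin_eq_zero_iff_of_lt_of_lt (by linarith [hα.1, hβ.2]) (by linarith [hα.2, hβ.1]),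
    sub_eq_zero]
  exact hαβ

section Nondegenerate

variable {α β : ℝ} (hα : Real.sin α ≠ 0) (hβ : Real.sin β ≠ 0) (hαβ : Real.sin (α - β) ≠ 0)
include hα hβ hαβ

lemma eq_of_proj_eq_of_proj_eq {z w : ℂ} (h₁ : proj α z = proj α w) (h₂ : proj β z = proj β w) :
    z = w := by
  simp only [proj] at h₁ h₂
  field_simp at h₁ h₂
  have him : (z.im - w.im) * Real.sin (α - β) = 0 := by
    rw [Real.sin_sub]
    linear_combination Real.sin β * h₁ - Real.sin α * h₂
  have him' : z.im = w.im := by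
    simpa [sub_eq_zero, hαβ] using him
  rw [him'] at h₁
  exact Complex.ext (mul_right_cancel₀ hα (by linarith)) him'

lemma inter_eq_of_proj_eq {z : ℂ} {r s : ℝ} (h₁ : proj α z = r) (h₂ : proj β z = s) :
    inter α β r s = z := by
  have hspec : proj α (inter α β r s) = r ∧ proj β (inter α β r s) = s :=
    Classical.epsilon_spec (p := fun z : ℂ => proj α z = r ∧ proj β z = s) ⟨z, h₁, h₂⟩
  exact eq_of_proj_eq_of_proj_eq hα hβ hαβ (hspec.1.trans h₁.symm) (hspec.2.trans h₂.symm)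

lemma inter_eq (r s : ℝ) :
    inter α β r s = ⟨(r * Real.sin α * Real.cos β - s * Real.cos α * Real.sin β) / Real.sin (α - β),
      (r - s) * Real.sin α * Real.sin β / Real.sin (α - β)⟩ := by
  apply inter_eq_of_proj_eq hα hβ hαβ <;>
  · simp only [proj]
    field_simp
    rw [Real.sin_sub]
    ring

end Nondegenerate

theorem inter_mul_explicit (α β : ℝ) (hα : α ∈ Set.Ioo 0 Real.pi)
    (hβ : β ∈ Set.Ioo 0 Real.pi) (hαβ : α ≠ β) :
    inter α β 0 1 * inter α β 1 0 =
      inter α β (Real.sin β ^ 2 / Real.sin (α - β) ^ 2)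
                (Real.sin α ^ 2 / Real.sin (α - β) ^ 2) := by
  have hsα : Real.sin α ≠ 0 := (Real.sin_pos_of_pos_of_lt_pi hα.1 hα.2).ne'
  have hsβ : Real.sin β ≠ 0 := (Real.sin_pos_of_pos_of_lt_pi hβ.1 hβ.2).ne'
  have hd := sin_sub_ne_zero_of_mem_Ioo hα hβ hαβ
  rw [inter_eq hsα hsβ hd 0 1, inter_eq hsα hsβ hd 1 0]
  symm
  apply inter_eq_of_proj_eq hsα hsβ hd
  · simp only [proj, Complex.mul_re, Complex.mul_im]
    field_simp
    linear_combination Real.sin β ^ 2 * Real.sin_sq_add_cos_sq α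
  · simp only [proj, Complex.mul_re, Complex.mul_im]
    field_simp
    linear_combination Real.sin α ^ 2 * Real.sin_sq_add_cos_sq β
end
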